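/- arXiv:1604.02227 — 9 statements merged into one kernel-verified Lean document; each statement's English description precedes it below -/
import Mathlib

section
/- For the quantum walk on the line with coin amplitudes γ_t(x), δ_t(x) evolving by γ_{t+1}(x) = c·γ_t(x+1) + s·δ_t(x+1) and δ_{t+1}(x) = s·γ_t(x-1) - c·δ_t(x-1), with initial data γ_0(-1)=γ_0(0)=c/√2, δ_0(-1)=δ_0(0)=s/√2 and zero elsewhere, the following symmetry holds for all even times 2t and all integers x ≥ 0: δ_{2t}(x-1) = δ_{2t}(-x) and s·γ_{2t}(x-1) - c·δ_{2t}(x-1) = -(s·γ_{2t}(-x-2) - c·δ_{2t}(-x-2)). -/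
noncomputable def lineWalk (c s : ℝ) : ℕ → (ℤ → ℝ) × (ℤ → ℝ)
  | 0 =>
      (fun x => if x = -1 ∨ x = 0 then c / Real.sqrt 2 else 0,
       fun x => if x = -1 ∨ x = 0 then s / Real.sqrt 2 else 0)
  | t + 1 =>
      (fun x => c * (lineWalk c s t).1 (x + 1) + s * (lineWalk c s t).2 (x + 1),
       fun x => s * (lineWalk c s t).1 (x - 1) - c * (lineWalk c s t).2 (x - 1))

lemma lineWalk_AB (c s : ℝ) : ∀ t : ℕ,
    (∀ x : ℤ, (lineWalk c s t).2 x = (-1 : ℝ) ^ t * (lineWalk c s t).2 (-1 - x)) ∧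
    (∀ y : ℤ, s * ((lineWalk c s t).1 y + (-1 : ℝ) ^ t * (lineWalk c s t).1 (-3 - y))
      = c * ((lineWalk c s t).2 y + (lineWalk c s t).2 (y + 2))) := by
  intro t
  induction t with
  | zero =>
    constructor
    · intro x
      simp only [lineWalk, pow_zero, one_mul]
      split_ifs <;> first | rfl | omega
    · intro y
      simp only [lineWalk, pow_zero, one_mul]
      split_ifs <;> first | ring1 | (exfalso; omega)
  | succ t ih =>
    obtain ⟨hA, hB⟩ := ih
    constructor
    · intro x
      have h1 := hA (x + 1)
      rw [show (-1 : ℤ) - (x + 1) = -2 - x by ring] at h1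
      have h2 := hB (x - 1)
      rw [show (-3 : ℤ) - (x - 1) = -2 - x by ring,
        show x - 1 + 2 = x + 1 by ring] at h2
      simp only [lineWalk]
      rw [show (-1 : ℤ) - x - 1 = -2 - x by ring, pow_succ]
      linear_combination h2 + c * h1
    · intro y
      have h1 := hA (y + 1)
      rw [show (-1 : ℤ) - (y + 1) = -2 - y by ring] at h1
      have h2 := hB (y - 1)
      rw [show (-3 : ℤ) - (y - 1) = -2 - y by ring,
        show y - 1 + 2 = y + 1 by ring] at h2
      simp only [lineWalk]
      rw [show (-3 : ℤ) - y + 1 = -2 - y by ring,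
        show y + 2 - 1 = y + 1 by ring, pow_succ]
      linear_combination (-c) * h2 + s ^ 2 * h1

theorem line_walk_even_symmetry (θ : ℝ) (hθ : θ ∈ Set.Ico 0 (2 * Real.pi))
    (h0 : θ ≠ 0) (hπ : θ ≠ Real.pi) :
    ∀ (t : ℕ) (x : ℤ), 0 ≤ x →
      (lineWalk (Real.cos θ) (Real.sin θ) (2 * t)).2 (x - 1)
        = (lineWalk (Real.cos θ) (Real.sin θ) (2 * t)).2 (-x) ∧
      Real.sin θ * (lineWalk (Real.cos θ) (Real.sin θ) (2 * t)).1 (x - 1)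
          - Real.cos θ * (lineWalk (Real.cos θ) (Real.sin θ) (2 * t)).2 (x - 1)
        = -(Real.sin θ * (lineWalk (Real.cos θ) (Real.sin θ) (2 * t)).1 (-x - 2)
            - Real.cos θ * (lineWalk (Real.cos θ) (Real.sin θ) (2 * t)).2 (-x - 2)) := by
  intro t x _
  obtain ⟨hA, hB⟩ := lineWalk_AB (Real.cos θ) (Real.sin θ) (2 * t)
  have he : ((-1 : ℝ)) ^ (2 * t) = 1 := by
    rw [pow_mul]; norm_num
  rw [he] at hA hB
  simp only [one_mul] at hA hB
  constructor
  · have h1 := hA (x - 1)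
    rw [show (-1 : ℤ) - (x - 1) = -x by ring] at h1
    exact h1
  · have h1 := hA (x + 1)
    rw [show (-1 : ℤ) - (x + 1) = -x - 2 by ring] at h1
    have h2 := hB (x - 1)
    rw [show (-3 : ℤ) - (x - 1) = -x - 2 by ring,
      show x - 1 + 2 = x + 1 by ring] at h2
    linear_combination h2 + Real.cos θ * h1
end

section
/- For the quantum walk on the line defined by γ_{t+1}(x) = c·γ_t(x+1) + s·δ_t(x+1), δ_{t+1}(x) = s·γ_t(x-1) - c·δ_t(x-1) with initial data γ_0(-1)=γ_0(0)=c/√2, δ_0(-1)=δ_0(0)=s/√2, at all odd times 2t+1 and all integers x ≥ 0: δ_{2t+1}(x-1) = -δ_{2t+1}(-x) and s·γ_{2t+1}(x-1) - c·δ_{2t+1}(x-1) = s·γ_{2t+1}(-x-2) - c·δ_{2t+1}(-x-2). -/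
lemma lineWalk_inv (c s : ℝ) (hcs : s ^ 2 + c ^ 2 = 1) (t : ℕ) :
    (∀ x : ℤ, (lineWalk c s t).2 (-1 - x) = (-1 : ℝ) ^ t * (lineWalk c s t).2 x) ∧
    (∀ x : ℤ, s * (lineWalk c s t).1 (-3 - x) - c * (lineWalk c s t).2 (-3 - x)
      = -((-1 : ℝ) ^ t) * (s * (lineWalk c s t).1 x - c * (lineWalk c s t).2 x)) := by
  induction t with
  | zero =>
    constructor
    · intro x
      simp only [lineWalk, pow_zero, one_mul]
      have h : (-1 - x = -1 ∨ -1 - x = 0) ↔ (x = -1 ∨ x = 0) := by omega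
      rw [if_congr h rfl rfl]
    · intro x
      simp only [lineWalk, pow_zero]
      have h3 : ¬(-3 - x = -1 ∨ -3 - x = 0) ∨ ¬(x = -1 ∨ x = 0) := by omega
      by_cases h1 : (-3 - x = -1 ∨ -3 - x = 0) <;>
        by_cases h2 : (x = -1 ∨ x = 0) <;>
        simp [h1, h2] at h3 ⊢ <;> ring
  | succ t ih =>
    obtain ⟨ihδ, ihF⟩ := ih
    set γ := (lineWalk c s t).1 with hγ
    set δ := (lineWalk c s t).2 with hδ
    constructor
    · intro x
      show s * γ (-1 - x - 1) - c * δ (-1 - x - 1)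
        = (-1 : ℝ) ^ (t + 1) * (s * γ (x - 1) - c * δ (x - 1))
      have e : (-1 - x - 1 : ℤ) = -3 - (x - 1) := by ring
      rw [e, ihF (x - 1), pow_succ]
      ring
    · intro x
      show s * (c * γ (-3 - x + 1) + s * δ (-3 - x + 1))
          - c * (s * γ (-3 - x - 1) - c * δ (-3 - x - 1))
        = -(-1 : ℝ) ^ (t + 1)
          * (s * (c * γ (x + 1) + s * δ (x + 1)) - c * (s * γ (x - 1) - c * δ (x - 1)))
      have a1 : (-3 - x + 1 : ℤ) = -3 - (x - 1) := by ring
      have a2 : (-3 - x - 1 : ℤ) = -3 - (x + 1) := by ring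
      have b1 : (-3 - (x - 1) : ℤ) = -1 - (x + 1) := by ring
      have b2 : (-3 - (x + 1) : ℤ) = -1 - (x + 3) := by ring
      rw [a1, a2, b1, b2]
      have e1 := ihF (x - 1)
      have e2 := ihF (x + 1)
      have e3 := ihδ (x + 1)
      rw [b1] at e1
      rw [b2] at e2
      rw [pow_succ]
      linear_combination c * e1 - c * e2 + (s ^ 2 + c ^ 2) * e3


theorem line_walk_odd_symmetry (θ : ℝ) (hθ : θ ∈ Set.Ico 0 (2 * Real.pi))
    (h0 : θ ≠ 0) (hπ : θ ≠ Real.pi) :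
    ∀ (t : ℕ) (x : ℤ), 0 ≤ x →
      (lineWalk (Real.cos θ) (Real.sin θ) (2 * t + 1)).2 (x - 1)
        = -(lineWalk (Real.cos θ) (Real.sin θ) (2 * t + 1)).2 (-x) ∧
      Real.sin θ * (lineWalk (Real.cos θ) (Real.sin θ) (2 * t + 1)).1 (x - 1)
          - Real.cos θ * (lineWalk (Real.cos θ) (Real.sin θ) (2 * t + 1)).2 (x - 1)
        = Real.sin θ * (lineWalk (Real.cos θ) (Real.sin θ) (2 * t + 1)).1 (-x - 2)
          - Real.cos θ * (lineWalk (Real.cos θ) (Real.sin θ) (2 * t + 1)).2 (-x - 2) := by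
  intro t x hx
  obtain ⟨hδ, hF⟩ := lineWalk_inv (Real.cos θ) (Real.sin θ) (Real.sin_sq_add_cos_sq θ) (2 * t + 1)
  have hsign : ((-1 : ℝ)) ^ (2 * t + 1) = -1 := by
    rw [pow_succ, pow_mul]; norm_num
  constructor
  · have := hδ x
    rw [hsign] at this
    have e : (-1 - x : ℤ) = -x - 1 := by ring
    rw [e] at this
    have e2 : (x - 1 : ℤ) = -1 - (-x - 1 + 1) + 0 := by ring
    -- use hδ at argument -x : δ(-1 - (x-1)) = -δ(x-1), and -1-(x-1) = -x
    have h' := hδ (x - 1)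
    rw [hsign] at h'
    have e3 : (-1 - (x - 1) : ℤ) = -x := by ring
    rw [e3] at h'
    linarith
  · have h' := hF (x - 1)
    rw [hsign] at h'
    have e3 : (-3 - (x - 1) : ℤ) = -x - 2 := by ring
    rw [e3] at h'
    linarith
end

section
/- Let α_t, β_t : ℕ → ℂ be the amplitudes of the half-line quantum walk with initial state α_0(0) = e^{-iθ}/√2, β_0(0) = i·e^{-iθ}/√2, and let γ_t, δ_t : ℤ → ℝ be the amplitudes of the line quantum walk with initial state γ_0(-1)=γ_0(0)=cos θ/√2, δ_0(-1)=δ_0(0)=sin θ/√2. Then for all t ∈ ℕ and x ∈ ℕ: at even times, α_{2t}(2x) = γ_{2t}(2x) - i·δ_{2t}(2x), β_{2t}(2x) = δ_{2t}(-2x-1) + i·γ_{2t}(-2x-1), α_{2t}(2x+1) = δ_{2t}(2x+1) + i·γ_{2t}(2x+1), β_{2t}(2x+1) = -γ_{2t}(-2x-2) + i·δ_{2t}(-2x-2); and at odd times, α_{2t+1}(2x) = δ_{2t+1}(2x) + i·γ_{2t+1}(2x), β_{2t+1}(2x) = γ_{2t+1}(-2x-1) - i·δ_{2t+1}(-2x-1),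 α_{2t+1}(2x+1) = γ_{2t+1}(2x+1) - i·δ_{2t+1}(2x+1), β_{2t+1}(2x+1) = -δ_{2t+1}(-2x-2) - i·γ_{2t+1}(-2x-2). -/
noncomputable def halfWalk (θ : ℝ) : ℕ → (ℕ → ℂ) × (ℕ → ℂ)
  | 0 =>
      (fun x => if x = 0 then Complex.exp (-(θ : ℂ) * Complex.I) / (Real.sqrt 2 : ℂ) else 0,
       fun x => if x = 0 then Complex.I * Complex.exp (-(θ : ℂ) * Complex.I) / (Real.sqrt 2 : ℂ) else 0)
  | t + 1 =>
      (fun x => (Real.cos θ : ℂ) * (halfWalk θ t).1 (x + 1) + (Real.sin θ : ℂ) * (halfWalk θ t).2 (x + 1),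
       fun x =>
         if x = 0 then (Real.cos θ : ℂ) * (halfWalk θ t).1 0 + (Real.sin θ : ℂ) * (halfWalk θ t).2 0
         else (Real.sin θ : ℂ) * (halfWalk θ t).1 (x - 1) - (Real.cos θ : ℂ) * (halfWalk θ t).2 (x - 1))

namespace HalfLineCopyAux

lemma lw1 (c s : ℝ) (u : ℕ) (y : ℤ) :
    (lineWalk c s (u+1)).1 y
      = c * (lineWalk c s u).1 (y+1) + s * (lineWalk c s u).2 (y+1) := rfl

lemma lw2 (c s : ℝ) (u : ℕ) (y : ℤ) :
    (lineWalk c s (u+1)).2 y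
      = s * (lineWalk c s u).1 (y-1) - c * (lineWalk c s u).2 (y-1) := rfl

lemma lw1c (c s : ℝ) (u : ℕ) (y : ℤ) :
    (((lineWalk c s (u+1)).1 y : ℝ) : ℂ)
      = (c:ℂ) * ((lineWalk c s u).1 (y+1) : ℝ) + (s:ℂ) * ((lineWalk c s u).2 (y+1) : ℝ) := by
  rw [lw1]; push_cast; ring

lemma lw2c (c s : ℝ) (u : ℕ) (y : ℤ) :
    (((lineWalk c s (u+1)).2 y : ℝ) : ℂ)
      = (s:ℂ) * ((lineWalk c s u).1 (y-1) : ℝ) - (c:ℂ) * ((lineWalk c s u).2 (y-1) : ℝ) := by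
  rw [lw2]; push_cast; ring

lemma hw1 (θ : ℝ) (u : ℕ) (y : ℕ) :
    (halfWalk θ (u+1)).1 y
      = (Real.cos θ : ℂ) * (halfWalk θ u).1 (y+1) + (Real.sin θ : ℂ) * (halfWalk θ u).2 (y+1) := rfl

lemma hw2z (θ : ℝ) (u : ℕ) :
    (halfWalk θ (u+1)).2 0
      = (Real.cos θ : ℂ) * (halfWalk θ u).1 0 + (Real.sin θ : ℂ) * (halfWalk θ u).2 0 := by
  simp only [halfWalk, if_true, reduceIte]

lemma hw2s (θ : ℝ) (u : ℕ) (y : ℕ) (hy : y ≠ 0) :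
    (halfWalk θ (u+1)).2 y
      = (Real.sin θ : ℂ) * (halfWalk θ u).1 (y-1) - (Real.cos θ : ℂ) * (halfWalk θ u).2 (y-1) := by
  simp only [halfWalk]
  rw [if_neg hy]

lemma lineInv (c s : ℝ) (u : ℕ) :
    (∀ x : ℤ, (lineWalk c s u).2 (-x-1) = (-1:ℝ)^u * (lineWalk c s u).2 x) ∧
    (∀ x : ℤ, s * ((lineWalk c s u).1 x + (-1:ℝ)^u * (lineWalk c s u).1 (-x-3)) =
      c * ((lineWalk c s u).2 (x+2) + (lineWalk c s u).2 x)) := by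
  induction u with
  | zero =>
      constructor <;> intro x <;> simp only [lineWalk, pow_zero, one_mul] <;>
        split_ifs <;> first | ring1 | omega
  | succ u ih =>
      obtain ⟨hA, hC⟩ := ih
      have he : ((-1:ℝ)^u) * (-1)^u = 1 := by
        rw [← pow_add, ← two_mul, pow_mul]; norm_num
      have hsucc : ((-1:ℝ))^(u+1) = -((-1:ℝ)^u) := by rw [pow_succ]; ring
      constructor
      · intro x
        rw [lw2, lw2, hsucc]
        have h1 := hA (x+1)
        have h2 := hC (x-1)
        linear_combination (norm := ring_nf) ((-1:ℝ)^u) * h2 - c * h1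
          - s * (lineWalk c s u).1 (-x-1-1) * he
      · intro x
        rw [lw1, lw1, lw2, lw2, hsucc]
        have h1 := hA (x+1)
        have h2 := hC (x-1)
        linear_combination (norm := ring_nf) (-c) * h2 - ((-1:ℝ)^u) * s^2 * h1
          - s^2 * (lineWalk c s u).2 (x+1) * he

def EP (θ : ℝ) (u : ℕ) : Prop := ∀ x : ℕ,
  ((halfWalk θ u).1 (2 * x) = ((lineWalk (Real.cos θ) (Real.sin θ) u).1 (2 * x) : ℂ)
      - Complex.I * ((lineWalk (Real.cos θ) (Real.sin θ) u).2 (2 * x) : ℂ)) ∧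
  ((halfWalk θ u).2 (2 * x) = ((lineWalk (Real.cos θ) (Real.sin θ) u).2 (-2 * x - 1) : ℂ)
      + Complex.I * ((lineWalk (Real.cos θ) (Real.sin θ) u).1 (-2 * x - 1) : ℂ)) ∧
  ((halfWalk θ u).1 (2 * x + 1) = ((lineWalk (Real.cos θ) (Real.sin θ) u).2 (2 * x + 1) : ℂ)
      + Complex.I * ((lineWalk (Real.cos θ) (Real.sin θ) u).1 (2 * x + 1) : ℂ)) ∧
  ((halfWalk θ u).2 (2 * x + 1) = -((lineWalk (Real.cos θ) (Real.sin θ) u).1 (-2 * x - 2) : ℂ)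
      + Complex.I * ((lineWalk (Real.cos θ) (Real.sin θ) u).2 (-2 * x - 2) : ℂ))

def OP (θ : ℝ) (u : ℕ) : Prop := ∀ x : ℕ,
  ((halfWalk θ u).1 (2 * x) = ((lineWalk (Real.cos θ) (Real.sin θ) u).2 (2 * x) : ℂ)
      + Complex.I * ((lineWalk (Real.cos θ) (Real.sin θ) u).1 (2 * x) : ℂ)) ∧
  ((halfWalk θ u).2 (2 * x) = ((lineWalk (Real.cos θ) (Real.sin θ) u).1 (-2 * x - 1) : ℂ)
      - Complex.I * ((lineWalk (Real.cos θ) (Real.sin θ) u).2 (-2 * x - 1) : ℂ)) ∧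
  ((halfWalk θ u).1 (2 * x + 1) = ((lineWalk (Real.cos θ) (Real.sin θ) u).1 (2 * x + 1) : ℂ)
      - Complex.I * ((lineWalk (Real.cos θ) (Real.sin θ) u).2 (2 * x + 1) : ℂ)) ∧
  ((halfWalk θ u).2 (2 * x + 1) = -((lineWalk (Real.cos θ) (Real.sin θ) u).2 (-2 * x - 2) : ℂ)
      - Complex.I * ((lineWalk (Real.cos θ) (Real.sin θ) u).1 (-2 * x - 2) : ℂ))

lemma stepEO (θ : ℝ) (u : ℕ) (hu : Even u) (h : EP θ u) : OP θ (u+1) := by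
  obtain ⟨hA, hC⟩ := lineInv (Real.cos θ) (Real.sin θ) u
  simp only [Even.neg_one_pow hu, one_mul] at hA hC
  have ha : ∀ y z : ℤ, z = -y-1 →
      (((lineWalk (Real.cos θ) (Real.sin θ) u).2 z : ℝ) : ℂ)
        = (((lineWalk (Real.cos θ) (Real.sin θ) u).2 y : ℝ) : ℂ) := by
    rintro y z rfl
    exact_mod_cast congrArg (fun r : ℝ => (r:ℂ)) (hA y)
  have hc : ∀ y a b : ℤ, a = -y-3 → b = y+2 →
      (Real.sin θ : ℂ) * ((((lineWalk (Real.cos θ) (Real.sin θ) u).1 y : ℝ) : ℂ)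
          + (((lineWalk (Real.cos θ) (Real.sin θ) u).1 a : ℝ) : ℂ))
        = (Real.cos θ : ℂ) * ((((lineWalk (Real.cos θ) (Real.sin θ) u).2 b : ℝ) : ℂ)
          + (((lineWalk (Real.cos θ) (Real.sin θ) u).2 y : ℝ) : ℂ)) := by
    rintro y a b rfl rfl
    have h := congrArg (fun r : ℝ => (r:ℂ)) (hC y)
    push_cast at h ⊢
    linear_combination h
  intro x
  refine ⟨?_, ?_, ?_, ?_⟩
  · linear_combination (norm := (push_cast; ring_nf)) hw1 θ u (2*x)
      + (Real.cos θ : ℂ) * (h x).2.2.1 + (Real.sin θ : ℂ) * (h x).2.2.2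
      - lw2c (Real.cos θ) (Real.sin θ) u (2*(x:ℤ)) - Complex.I * lw1c (Real.cos θ) (Real.sin θ) u (2*(x:ℤ))
      - hc (2*(x:ℤ)-1) (-2*(x:ℤ)-2) (2*(x:ℤ)+1) (by ring) (by ring)
      + Complex.I * (Real.sin θ : ℂ) * ha (2*(x:ℤ)+1) (-2*(x:ℤ)-2) (by ring)
  · rcases x with _ | x
    · linear_combination (norm := (push_cast; ring_nf)) hw2z θ u
        + (Real.cos θ : ℂ) * (h 0).1 + (Real.sin θ : ℂ) * (h 0).2.1
        - lw1c (Real.cos θ) (Real.sin θ) u (-1) + Complex.I * lw2c (Real.cos θ) (Real.sin θ) u (-1)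
        + (Real.sin θ : ℂ) * ha 0 (-1) (by ring)
        + Complex.I * hc (-2) (-1) 0 (by ring) (by ring)
    · have hb := hw2s θ u (2*(x+1)) (by omega)
      rw [show (2*(x+1)-1 : ℕ) = 2*x+1 from by omega] at hb
      linear_combination (norm := (push_cast; ring_nf)) hb
        + (Real.sin θ : ℂ) * (h x).2.2.1 - (Real.cos θ : ℂ) * (h x).2.2.2
        - lw1c (Real.cos θ) (Real.sin θ) u (-2*((x:ℤ)+1)-1)
        + Complex.I * lw2c (Real.cos θ) (Real.sin θ) u (-2*((x:ℤ)+1)-1)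
        + (-(Real.sin θ : ℂ) - Complex.I * (Real.cos θ : ℂ)) * ha (2*(x:ℤ)+1) (-2*(x:ℤ)-2) (by ring)
        + Complex.I * hc (2*(x:ℤ)+1) (-2*(x:ℤ)-4) (2*(x:ℤ)+3) (by ring) (by ring)
        - Complex.I * (Real.cos θ : ℂ) * ha (2*(x:ℤ)+3) (-2*(x:ℤ)-4) (by ring)
  · linear_combination (norm := (push_cast; ring_nf)) hw1 θ u (2*x+1)
      + (Real.cos θ : ℂ) * (h (x+1)).1 + (Real.sin θ : ℂ) * (h (x+1)).2.1
      - lw1c (Real.cos θ) (Real.sin θ) u (2*(x:ℤ)+1) + Complex.I * lw2c (Real.cos θ) (Real.sin θ) u (2*(x:ℤ)+1)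
      + (Real.sin θ : ℂ) * ha (2*(x:ℤ)+2) (-2*(x:ℤ)-3) (by ring)
      + Complex.I * hc (2*(x:ℤ)) (-2*(x:ℤ)-3) (2*(x:ℤ)+2) (by ring) (by ring)
  · have hb := hw2s θ u (2*x+1) (by omega)
    rw [show (2*x+1-1 : ℕ) = 2*x from by omega] at hb
    linear_combination (norm := (push_cast; ring_nf)) hb
      + (Real.sin θ : ℂ) * (h x).1 - (Real.cos θ : ℂ) * (h x).2.1
      + lw2c (Real.cos θ) (Real.sin θ) u (-2*(x:ℤ)-2) + Complex.I * lw1c (Real.cos θ) (Real.sin θ) u (-2*(x:ℤ)-2)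
      + hc (2*(x:ℤ)) (-2*(x:ℤ)-3) (2*(x:ℤ)+2) (by ring) (by ring)
      + (-(Real.cos θ : ℂ) + Complex.I * (Real.sin θ : ℂ)) * ha (2*(x:ℤ)) (-2*(x:ℤ)-1) (by ring)
      - (Real.cos θ : ℂ) * ha (2*(x:ℤ)+2) (-2*(x:ℤ)-3) (by ring)

lemma stepOE (θ : ℝ) (u : ℕ) (hu : Odd u) (h : OP θ u) : EP θ (u+1) := by
  obtain ⟨hA, hC⟩ := lineInv (Real.cos θ) (Real.sin θ) u
  simp only [Odd.neg_one_pow hu, neg_one_mul] at hA hC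
  have ha : ∀ y z : ℤ, z = -y-1 →
      (((lineWalk (Real.cos θ) (Real.sin θ) u).2 z : ℝ) : ℂ)
        = -(((lineWalk (Real.cos θ) (Real.sin θ) u).2 y : ℝ) : ℂ) := by
    rintro y z rfl
    have h := congrArg (fun r : ℝ => (r:ℂ)) (hA y)
    push_cast at h ⊢
    linear_combination h
  have hc : ∀ y a b : ℤ, a = -y-3 → b = y+2 →
      (Real.sin θ : ℂ) * ((((lineWalk (Real.cos θ) (Real.sin θ) u).1 y : ℝ) : ℂ)
          - (((lineWalk (Real.cos θ) (Real.sin θ) u).1 a : ℝ) : ℂ))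
        = (Real.cos θ : ℂ) * ((((lineWalk (Real.cos θ) (Real.sin θ) u).2 b : ℝ) : ℂ)
          + (((lineWalk (Real.cos θ) (Real.sin θ) u).2 y : ℝ) : ℂ)) := by
    rintro y a b rfl rfl
    have h := congrArg (fun r : ℝ => (r:ℂ)) (hC y)
    push_cast at h ⊢
    linear_combination h
  intro x
  refine ⟨?_, ?_, ?_, ?_⟩
  · linear_combination (norm := (push_cast; ring_nf)) hw1 θ u (2*x)
      + (Real.cos θ : ℂ) * (h x).2.2.1 + (Real.sin θ : ℂ) * (h x).2.2.2
      - lw1c (Real.cos θ) (Real.sin θ) u (2*(x:ℤ)) + Complex.I * lw2c (Real.cos θ) (Real.sin θ) u (2*(x:ℤ))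
      - (Real.sin θ : ℂ) * ha (2*(x:ℤ)+1) (-2*(x:ℤ)-2) (by ring)
      + Complex.I * hc (2*(x:ℤ)-1) (-2*(x:ℤ)-2) (2*(x:ℤ)+1) (by ring) (by ring)
  · rcases x with _ | x
    · linear_combination (norm := (push_cast; ring_nf)) hw2z θ u
        + (Real.cos θ : ℂ) * (h 0).1 + (Real.sin θ : ℂ) * (h 0).2.1
        - lw2c (Real.cos θ) (Real.sin θ) u (-1) - Complex.I * lw1c (Real.cos θ) (Real.sin θ) u (-1)
        - hc (-2) (-1) 0 (by ring) (by ring)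
        - Complex.I * (Real.sin θ : ℂ) * ha 0 (-1) (by ring)
    · have hb := hw2s θ u (2*(x+1)) (by omega)
      rw [show (2*(x+1)-1 : ℕ) = 2*x+1 from by omega] at hb
      linear_combination (norm := (push_cast; ring_nf)) hb
        + (Real.sin θ : ℂ) * (h x).2.2.1 - (Real.cos θ : ℂ) * (h x).2.2.2
        - lw2c (Real.cos θ) (Real.sin θ) u (-2*((x:ℤ)+1)-1)
        - Complex.I * lw1c (Real.cos θ) (Real.sin θ) u (-2*((x:ℤ)+1)-1)
        + hc (2*(x:ℤ)+1) (-2*(x:ℤ)-4) (2*(x:ℤ)+3) (by ring) (by ring)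
        + ((Real.cos θ : ℂ) - Complex.I * (Real.sin θ : ℂ)) * ha (2*(x:ℤ)+1) (-2*(x:ℤ)-2) (by ring)
        + (Real.cos θ : ℂ) * ha (2*(x:ℤ)+3) (-2*(x:ℤ)-4) (by ring)
  · linear_combination (norm := (push_cast; ring_nf)) hw1 θ u (2*x+1)
      + (Real.cos θ : ℂ) * (h (x+1)).1 + (Real.sin θ : ℂ) * (h (x+1)).2.1
      - lw2c (Real.cos θ) (Real.sin θ) u (2*(x:ℤ)+1) - Complex.I * lw1c (Real.cos θ) (Real.sin θ) u (2*(x:ℤ)+1)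
      - hc (2*(x:ℤ)) (-2*(x:ℤ)-3) (2*(x:ℤ)+2) (by ring) (by ring)
      - Complex.I * (Real.sin θ : ℂ) * ha (2*(x:ℤ)+2) (-2*(x:ℤ)-3) (by ring)
  · have hb := hw2s θ u (2*x+1) (by omega)
    rw [show (2*x+1-1 : ℕ) = 2*x from by omega] at hb
    linear_combination (norm := (push_cast; ring_nf)) hb
      + (Real.sin θ : ℂ) * (h x).1 - (Real.cos θ : ℂ) * (h x).2.1
      + lw1c (Real.cos θ) (Real.sin θ) u (-2*(x:ℤ)-2) - Complex.I * lw2c (Real.cos θ) (Real.sin θ) u (-2*(x:ℤ)-2)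
      + ((Real.sin θ : ℂ) + Complex.I * (Real.cos θ : ℂ)) * ha (2*(x:ℤ)) (-2*(x:ℤ)-1) (by ring)
      + Complex.I * (Real.cos θ : ℂ) * ha (2*(x:ℤ)+2) (-2*(x:ℤ)-3) (by ring)
      + Complex.I * hc (2*(x:ℤ)) (-2*(x:ℤ)-3) (2*(x:ℤ)+2) (by ring) (by ring)

lemma hexp (θ : ℝ) : Complex.exp (-(θ:ℂ) * Complex.I)
    = (Real.cos θ : ℂ) - (Real.sin θ : ℂ) * Complex.I := by
  rw [show -(θ:ℂ) * Complex.I = ((-θ : ℝ) : ℂ) * Complex.I by push_cast; ring,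
    Complex.exp_mul_I, ← Complex.ofReal_cos, ← Complex.ofReal_sin,
    Real.cos_neg, Real.sin_neg]
  push_cast
  ring

lemma baseE (θ : ℝ) : EP θ 0 := by
  intro x
  refine ⟨?_, ?_, ?_, ?_⟩ <;>
    simp only [lineWalk, halfWalk] <;>
    split_ifs <;>
    first
      | contradiction
      | omega
      | (rw [hexp]; push_cast; ring1)
      | (rw [hexp]; push_cast;
         linear_combination (norm := ring_nf)
           (-(Complex.sin (θ:ℂ)) / ((Real.sqrt 2 : ℝ) : ℂ)) * Complex.I_sq)
      | simp

lemma mainEO (θ : ℝ) : ∀ t : ℕ, EP θ (2*t) ∧ OP θ (2*t+1) := by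
  intro t
  induction t with
  | zero =>
      constructor
      · simpa using baseE θ
      · have := stepEO θ 0 Even.zero (baseE θ)
        simpa using this
  | succ t ih =>
      have hE := stepOE θ (2*t+1) ⟨t, by ring⟩ ih.2
      have hO := stepEO θ (2*t+1+1) ⟨t+1, by ring⟩ hE
      constructor
      · rw [show 2*(t+1) = 2*t+1+1 from by ring]; exact hE
      · rw [show 2*(t+1)+1 = 2*t+1+1+1 from by ring]; exact hO

end HalfLineCopyAux

theorem half_line_copy (θ : ℝ) (hθ : θ ∈ Set.Ico 0 (2 * Real.pi))
    (h0 : θ ≠ 0) (hπ : θ ≠ Real.pi) :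
    ∀ (t x : ℕ),
      let α := fun (u : ℕ) (y : ℕ) => (halfWalk θ u).1 y
      let β := fun (u : ℕ) (y : ℕ) => (halfWalk θ u).2 y
      let γ := fun (u : ℕ) (y : ℤ) => (lineWalk (Real.cos θ) (Real.sin θ) u).1 y
      let δ := fun (u : ℕ) (y : ℤ) => (lineWalk (Real.cos θ) (Real.sin θ) u).2 y
      (α (2 * t) (2 * x) = (γ (2 * t) (2 * x) : ℂ) - Complex.I * (δ (2 * t) (2 * x) : ℂ)) ∧
      (β (2 * t) (2 * x) = (δ (2 * t) (-2 * x - 1) : ℂ) + Complex.I * (γ (2 * t) (-2 * x - 1) : ℂ)) ∧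
      (α (2 * t) (2 * x + 1) = (δ (2 * t) (2 * x + 1) : ℂ) + Complex.I * (γ (2 * t) (2 * x + 1) : ℂ)) ∧
      (β (2 * t) (2 * x + 1) = -(γ (2 * t) (-2 * x - 2) : ℂ) + Complex.I * (δ (2 * t) (-2 * x - 2) : ℂ)) ∧
      (α (2 * t + 1) (2 * x) = (δ (2 * t + 1) (2 * x) : ℂ) + Complex.I * (γ (2 * t + 1) (2 * x) : ℂ)) ∧
      (β (2 * t + 1) (2 * x) = (γ (2 * t + 1) (-2 * x - 1) : ℂ) - Complex.I * (δ (2 * t + 1) (-2 * x - 1) : ℂ)) ∧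
      (α (2 * t + 1) (2 * x + 1) = (γ (2 * t + 1) (2 * x + 1) : ℂ) - Complex.I * (δ (2 * t + 1) (2 * x + 1) : ℂ)) ∧
      (β (2 * t + 1) (2 * x + 1) = -(δ (2 * t + 1) (-2 * x - 2) : ℂ) - Complex.I * (γ (2 * t + 1) (-2 * x - 2) : ℂ)) := by
  intro t x
  obtain ⟨hE, hO⟩ := HalfLineCopyAux.mainEO θ t
  obtain ⟨e1, e2, e3, e4⟩ := hE x
  obtain ⟨o1, o2, o3, o4⟩ := hO x
  exact ⟨e1, e2, e3, e4, o1, o2, o3, o4⟩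
end

section
/- For the quantum walk on the line with delocalized initial state γ_0 = c/√2, δ_0 = s/√2 on {-1,0} and parameter θ ≠ 0, π/2, π, 3π/2, the leftmost probabilities satisfy P(Y_t^L = -t-1) = P(Y_t^L = -t) = c^{2(t-1)}/2 for all t ≥ 1, where c = cos θ. -/
/-!
Nothing can reach the two leftmost sites except by stepping left at every step, and a left
step only feeds the `γ` component, so `δ_t` vanishes there and each step multiplies `γ` by `c`.
After the first step `γ_1(-2) = γ_1(-1) = (c² + s²)/√2 = 1/√2`, hence both leftmost
amplitudes at time `t` are `c^(t-1)/√2`.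
-/

open Real

section
variable (c s : ℝ)

lemma lineWalk_eq_zero_of_lt : ∀ (t : ℕ) (x : ℤ), x < -(t : ℤ) - 1 →
    (lineWalk c s t).1 x = 0 ∧ (lineWalk c s t).2 x = 0
  | 0, x, hx => by
      have hx' : ¬(x = -1 ∨ x = 0) := by omega
      simp [lineWalk, hx']
  | t + 1, x, hx => by
      obtain ⟨hγ₁, hδ₁⟩ := lineWalk_eq_zero_of_lt t (x + 1) (by omega)
      obtain ⟨hγ₂, hδ₂⟩ := lineWalk_eq_zero_of_lt t (x - 1) (by omega)
      simp [lineWalk, hγ₁, hδ₁, hγ₂, hδ₂]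

lemma lineWalk_succ_snd_eq_zero (t : ℕ) {x : ℤ} (hx : x ≤ -(t : ℤ) - 1) :
    (lineWalk c s (t + 1)).2 x = 0 := by
  obtain ⟨hγ, hδ⟩ := lineWalk_eq_zero_of_lt c s t (x - 1) (by omega)
  simp [lineWalk, hγ, hδ]

lemma lineWalk_succ_fst_eq_of_le : ∀ (t : ℕ) {x : ℤ}, -(t : ℤ) - 2 ≤ x → x ≤ -(t : ℤ) - 1 →
    (lineWalk c s (t + 1)).1 x = c ^ t * (c ^ 2 + s ^ 2) / √2
  | 0, x, h₁, h₂ => by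
      have hx : x + 1 = -1 ∨ x + 1 = 0 := by omega
      simp only [lineWalk, if_pos hx]
      ring
  | t + 1, x, h₁, h₂ => by
      have hγ := lineWalk_succ_fst_eq_of_le t (x := x + 1) (by push_cast at h₁ ⊢; omega)
        (by push_cast at h₂ ⊢; omega)
      have hδ := lineWalk_succ_snd_eq_zero c s t (x := x + 1) (by push_cast at h₂ ⊢; omega)
      simp only [lineWalk] at hγ hδ ⊢
      rw [hγ, hδ]
      ring

lemma lineWalk_succ_leftmost_prob (hcs : c ^ 2 + s ^ 2 = 1) (t : ℕ) (x : ℤ)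
    (h₁ : -(t : ℤ) - 2 ≤ x) (h₂ : x ≤ -(t : ℤ) - 1) :
    (lineWalk c s (t + 1)).1 x ^ 2 + (lineWalk c s (t + 1)).2 x ^ 2 = c ^ (2 * t) / 2 := by
  rw [lineWalk_succ_fst_eq_of_le c s t h₁ h₂, lineWalk_succ_snd_eq_zero c s t h₂, hcs,
    mul_one, div_pow, sq_sqrt zero_le_two, ← pow_mul, mul_comm t]
  ring

end

theorem line_walk_leftmost_probability_general (θ : ℝ) :
    ∀ t : ℕ, 1 ≤ t →
      (lineWalk (Real.cos θ) (Real.sin θ) t).1 (-(t : ℤ) - 1) ^ 2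
          + (lineWalk (Real.cos θ) (Real.sin θ) t).2 (-(t : ℤ) - 1) ^ 2
        = Real.cos θ ^ (2 * (t - 1)) / 2 ∧
      (lineWalk (Real.cos θ) (Real.sin θ) t).1 (-(t : ℤ)) ^ 2
          + (lineWalk (Real.cos θ) (Real.sin θ) t).2 (-(t : ℤ)) ^ 2
        = Real.cos θ ^ (2 * (t - 1)) / 2 := by
  intro t ht
  obtain ⟨n, rfl⟩ := Nat.exists_eq_add_of_le' ht
  have hprob := lineWalk_succ_leftmost_prob (cos θ) (sin θ) (cos_sq_add_sin_sq θ) n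
  rw [Nat.add_sub_cancel]
  push_cast
  exact ⟨hprob _ (by omega) (by omega), hprob _ (by omega) (by omega)⟩

theorem line_walk_leftmost_probability (θ : ℝ) (hθ : θ ∈ Set.Ico 0 (2 * Real.pi))
    (h0 : θ ≠ 0) (h1 : θ ≠ Real.pi / 2) (h2 : θ ≠ Real.pi) (h3 : θ ≠ 3 * Real.pi / 2) :
    ∀ t : ℕ, 1 ≤ t →
      (lineWalk (Real.cos θ) (Real.sin θ) t).1 (-(t : ℤ) - 1) ^ 2
          + (lineWalk (Real.cos θ) (Real.sin θ) t).2 (-(t : ℤ) - 1) ^ 2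
        = Real.cos θ ^ (2 * (t - 1)) / 2 ∧
      (lineWalk (Real.cos θ) (Real.sin θ) t).1 (-(t : ℤ)) ^ 2
          + (lineWalk (Real.cos θ) (Real.sin θ) t).2 (-(t : ℤ)) ^ 2
        = Real.cos θ ^ (2 * (t - 1)) / 2 :=
  line_walk_leftmost_probability_general θ
end

section
/- For θ with c = cos θ ≠ 0 and s = sin θ ≠ 0, the function f(y) = |s| / (π(1+y)√(c² - y²)) on the interval (-|c|, |c|) is a probability density: ∫_{-|c|}^{|c|} |s| / (π(1+y)√(c² - y²)) dy = 1. -/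
/-!
With c = |cos θ| ∈ (0, 1), the Möbius map u(y) = (c² + y) / (c (1 + y)) sends (-c, c) onto
(-1, 1), and 1 - u² = (1 - c²)(c² - y²) / (c (1 + y))². Hence arcsin ∘ u is a primitive of
√(1 - c²) / ((1 + y) √(c² - y²)), and since |sin θ| = √(1 - c²) the integral equals
(arcsin 1 - arcsin (-1)) / π = 1. The integrand is nonnegative, so its (improper) integrability
comes for free with the fundamental theorem of calculus.
-/

open MeasureTheory Set Real

theorem hasDerivAt_arcsin_sq_add_div_mul_one_add {c y : ℝ} (hc₀ : 0 < c) (hc₁ : c < 1)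
    (hy : y ∈ Ioo (-c) c) :
    HasDerivAt (fun t => arcsin ((c ^ 2 + t) / (c * (1 + t))))
      (√(1 - c ^ 2) / ((1 + y) * √(c ^ 2 - y ^ 2))) y := by
  obtain ⟨hy₁, hy₂⟩ := hy
  have h₁y : 0 < 1 + y := by linarith
  have hd : 0 < c * (1 + y) := by positivity
  have hs : 0 < 1 - c ^ 2 := by nlinarith
  have hq : 0 < c ^ 2 - y ^ 2 := by nlinarith
  have hsub : 1 - ((c ^ 2 + y) / (c * (1 + y))) ^ 2
      = (1 - c ^ 2) * (c ^ 2 - y ^ 2) / (c * (1 + y)) ^ 2 := by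
    field_simp
    ring
  have hsqrt : √(1 - ((c ^ 2 + y) / (c * (1 + y))) ^ 2)
      = √(1 - c ^ 2) * √(c ^ 2 - y ^ 2) / (c * (1 + y)) := by
    rw [hsub, sqrt_div' _ (sq_nonneg _), sqrt_mul hs.le, sqrt_sq hd.le]
  have hpos : 0 < 1 - ((c ^ 2 + y) / (c * (1 + y))) ^ 2 := by
    rw [hsub]
    positivity
  have hU : HasDerivAt (fun t => (c ^ 2 + t) / (c * (1 + t)))
      ((1 * (c * (1 + y)) - (c ^ 2 + y) * (c * 1)) / (c * (1 + y)) ^ 2) y :=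
    ((hasDerivAt_id y).const_add _).div (((hasDerivAt_id y).const_add 1).const_mul c) hd.ne'
  refine ((hasDerivAt_arcsin ?_ ?_).comp y hU).congr_deriv ?_
  · nlinarith
  · nlinarith
  rw [hsqrt]
  field_simp
  rw [sq_sqrt hs.le]
  ring

theorem integral_Ioo_inv_one_add_mul_sqrt_sq_sub_sq {c : ℝ} (hc₀ : 0 < c) (hc₁ : c < 1) :
    ∫ y in Ioo (-c) c, ((1 + y) * √(c ^ 2 - y ^ 2))⁻¹ = π / √(1 - c ^ 2) := by
  have hs : 0 < √(1 - c ^ 2) := sqrt_pos.2 (by nlinarith)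
  set F : ℝ → ℝ := fun t => arcsin ((c ^ 2 + t) / (c * (1 + t))) / √(1 - c ^ 2)
  have hF : ∀ y ∈ Ioo (-c) c, HasDerivAt F ((1 + y) * √(c ^ 2 - y ^ 2))⁻¹ y := fun y hy => by
    refine ((hasDerivAt_arcsin_sq_add_div_mul_one_add hc₀ hc₁ hy).div_const _).congr_deriv ?_
    field_simp
  have hFcont : ContinuousOn F (Icc (-c) c) := by
    refine (continuous_arcsin.comp_continuousOn ?_).div_const _
    refine ContinuousOn.div (by fun_prop) (by fun_prop) fun y hy => ?_
    have : 0 < 1 + y := by linarith [hy.1]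
    positivity
  have hnonneg : ∀ y ∈ Ioo (-c) c, 0 ≤ ((1 + y) * √(c ^ 2 - y ^ 2))⁻¹ := fun y hy => by
    have : 0 < 1 + y := by linarith [hy.1]
    positivity
  have hle : -c ≤ c := by linarith
  rw [← integral_Ioc_eq_integral_Ioo, ← intervalIntegral.integral_of_le hle,
    intervalIntegral.integral_eq_sub_of_hasDerivAt_of_le hle hFcont hF
      ((intervalIntegrable_iff_integrableOn_Ioc_of_le hle).2
        (intervalIntegral.integrableOn_deriv_of_nonneg hFcont hF hnonneg))]
  have hright : (c ^ 2 + c) / (c * (1 + c)) = 1 := by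
    rw [div_eq_one_iff_eq (by positivity)]; ring
  have hleft : (c ^ 2 + -c) / (c * (1 + -c)) = -1 := by
    rw [div_eq_iff (by nlinarith)]; ring
  simp only [F, hright, hleft, arcsin_one, arcsin_neg_one]
  ring

theorem konno_density_integral (θ : ℝ) (hc : Real.cos θ ≠ 0) (hs : Real.sin θ ≠ 0) :
    ∫ y in Set.Ioo (-|Real.cos θ|) |Real.cos θ|,
      |Real.sin θ| / (Real.pi * (1 + y) * Real.sqrt (Real.cos θ ^ 2 - y ^ 2)) = 1 := by
  set c := |cos θ|
  have hc₀ : 0 < c := abs_pos.2 hc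
  have hsin : |sin θ| = √(1 - c ^ 2) := by rw [sq_abs, ← sin_sq, sqrt_sq_eq_abs]
  have hc₁ : c < 1 := by
    have := sin_sq_add_cos_sq θ
    nlinarith [sq_abs (cos θ), sq_pos_of_ne_zero hs]
  simp_rw [← sq_abs (cos θ)]
  calc ∫ y in Ioo (-c) c, |sin θ| / (π * (1 + y) * √(c ^ 2 - y ^ 2))
      = ∫ y in Ioo (-c) c, |sin θ| / π * ((1 + y) * √(c ^ 2 - y ^ 2))⁻¹ := by
        congr 1 with y
        simp only [div_eq_mul_inv, mul_inv]
        ring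
    _ = 1 := by
        rw [integral_const_mul, integral_Ioo_inv_one_add_mul_sqrt_sq_sub_sq hc₀ hc₁, hsin]
        field_simp [pi_pos.ne', (sqrt_pos.2 (by nlinarith : (0:ℝ) < 1 - c ^ 2)).ne']
end

section
/- For θ with c = cos θ ≠ 0, s = sin θ ≠ 0, ∫_0^{|c|} 2|s| / (π(1 - y²)√(c² - y²)) dy = 1; that is, the limit density of X_t^{HL}/t for the half-line quantum walk, namely g(y) = 2|s| / (π(1-y²)√(c²-y²)) · 1_{[0,|c|)}(y), integrates to 1 over ℝ. -/
/-!
Substituting `x = b y / (a √(1 - y²))`, which maps `[0, a]` onto `[0, 1]` when `a² + b² = 1`,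
turns `b / ((1 - y²) √(a² - y²)) dy` into `dx / √(1 - x²)`. Hence
`arcsin (b y / (a √(1 - y²)))` is a primitive of the density, and the integral over `[0, a)` is
`arcsin 1 - arcsin 0 = π / 2`. With `a = |cos θ|`, `b = |sin θ|` the factor `2 / π` normalises it.
-/

open MeasureTheory Real

lemma hasDerivAt_div_sqrt_one_sub_sq {y : ℝ} (hy : y ^ 2 < 1) :
    HasDerivAt (fun x => x / √(1 - x ^ 2)) ((1 - y ^ 2)⁻¹ / √(1 - y ^ 2)) y := by
  have h1 : 0 < 1 - y ^ 2 := by linarith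
  have ht : 0 < √(1 - y ^ 2) := sqrt_pos.mpr h1
  have hsqrt : HasDerivAt (fun x => √(1 - x ^ 2)) (-y / √(1 - y ^ 2)) y := by
    refine (((hasDerivAt_pow 2 y).const_sub 1).sqrt h1.ne').congr_deriv ?_
    field_simp
    ring
  refine ((hasDerivAt_id' y).div hsqrt ht.ne').congr_deriv ?_
  field_simp
  rw [sq_sqrt h1.le]
  ring

lemma one_sub_sq_mul_div_mul_sqrt {a b y : ℝ} (ha : a ≠ 0) (hab : a ^ 2 + b ^ 2 = 1)
    (hy : y ^ 2 < 1) :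
    1 - (b * y / (a * √(1 - y ^ 2))) ^ 2 = (a ^ 2 - y ^ 2) / (a ^ 2 * (1 - y ^ 2)) := by
  have h1 : 0 < 1 - y ^ 2 := by linarith
  rw [div_pow, mul_pow, mul_pow, sq_sqrt h1.le]
  field_simp
  linear_combination (-y ^ 2) * hab

lemma hasDerivAt_arcsin_mul_div_mul_sqrt {a b y : ℝ} (ha : 0 < a) (hab : a ^ 2 + b ^ 2 = 1)
    (hy : y ^ 2 < a ^ 2) :
    HasDerivAt (fun x => arcsin (b * x / (a * √(1 - x ^ 2))))
      (b / ((1 - y ^ 2) * √(a ^ 2 - y ^ 2))) y := by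
  have hy1 : y ^ 2 < 1 := by nlinarith
  have h1 : 0 < 1 - y ^ 2 := by linarith
  have h2 : 0 < a ^ 2 - y ^ 2 := by linarith
  have hratio := one_sub_sq_mul_div_mul_sqrt ha.ne' hab hy1
  have habs : |b * y / (a * √(1 - y ^ 2))| < 1 := by
    rw [← sq_lt_one_iff_abs_lt_one, ← sub_pos, hratio]
    positivity
  have harcsin := hasDerivAt_arcsin (abs_lt.mp habs).1.ne' (abs_lt.mp habs).2.ne
  have hinner : HasDerivAt (fun x => b * x / (a * √(1 - x ^ 2)))
      (b / a * ((1 - y ^ 2)⁻¹ / √(1 - y ^ 2))) y := by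
    refine ((hasDerivAt_div_sqrt_one_sub_sq hy1).const_mul (b / a)).congr_of_eventuallyEq
      (Filter.Eventually.of_forall fun x => ?_)
    field_simp
  refine (harcsin.comp y hinner).congr_deriv ?_
  rw [hratio, sqrt_div h2.le, sqrt_mul (sq_nonneg a), sqrt_sq ha.le]
  field_simp

lemma continuousOn_arcsin_mul_div_mul_sqrt {a : ℝ} (ha : a ≠ 0) (b : ℝ) :
    ContinuousOn (fun x => arcsin (b * x / (a * √(1 - x ^ 2)))) (Set.Ioo (-1) 1) := by
  refine continuous_arcsin.comp_continuousOn (ContinuousOn.div (by fun_prop) (by fun_prop) ?_)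
  intro x ⟨hx1, hx2⟩
  have : 0 < 1 - x ^ 2 := by nlinarith
  exact mul_ne_zero ha (sqrt_pos.mpr this).ne'

theorem integral_Ico_div_mul_sqrt_sub_sq {a b : ℝ} (ha : 0 < a) (hb : 0 < b)
    (hab : a ^ 2 + b ^ 2 = 1) :
    ∫ y in Set.Ico 0 a, b / ((1 - y ^ 2) * √(a ^ 2 - y ^ 2)) = π / 2 := by
  set F := fun x => arcsin (b * x / (a * √(1 - x ^ 2)))
  have ha1 : a < 1 := by nlinarith
  have hcont : ContinuousOn F (Set.Icc 0 a) :=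
    (continuousOn_arcsin_mul_div_mul_sqrt ha.ne' b).mono fun x ⟨hx0, hxa⟩ => ⟨by linarith, by linarith⟩
  have hderiv : ∀ y ∈ Set.Ioo 0 a, HasDerivAt F (b / ((1 - y ^ 2) * √(a ^ 2 - y ^ 2))) y :=
    fun y ⟨hy0, hya⟩ => hasDerivAt_arcsin_mul_div_mul_sqrt ha hab (by nlinarith)
  have hnonneg : ∀ y ∈ Set.Ioo 0 a, 0 ≤ b / ((1 - y ^ 2) * √(a ^ 2 - y ^ 2)) :=
    fun y ⟨hy0, hya⟩ => div_nonneg hb.le (mul_nonneg (by nlinarith) (sqrt_nonneg _))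
  have hint := intervalIntegral.integrableOn_deriv_of_nonneg hcont hderiv hnonneg
  have hFa : F a = π / 2 := by
    have : √(1 - a ^ 2) = b := by rw [← sqrt_sq hb.le]; congr 1; linarith
    simp only [F, this, mul_comm a b, div_self (mul_pos hb ha).ne', arcsin_one]
  rw [integral_Ico_eq_integral_Ioo, ← integral_Ioc_eq_integral_Ioo,
    ← intervalIntegral.integral_of_le ha.le,
    intervalIntegral.integral_eq_sub_of_hasDerivAt_of_le ha.le hcont hderiv
      ((intervalIntegrable_iff_integrableOn_Ioc_of_le ha.le).mpr hint), hFa]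
  simp [F]

theorem half_line_limit_density_integral (θ : ℝ) (hc : Real.cos θ ≠ 0) (hs : Real.sin θ ≠ 0) :
    ∫ y in Set.Ico 0 |Real.cos θ|,
      2 * |Real.sin θ| / (Real.pi * (1 - y ^ 2) * Real.sqrt (Real.cos θ ^ 2 - y ^ 2)) = 1 := by
  have hab : |cos θ| ^ 2 + |sin θ| ^ 2 = 1 := by simp only [sq_abs, cos_sq_add_sin_sq]
  have hdensity : ∀ y, 2 * |sin θ| / (π * (1 - y ^ 2) * √(cos θ ^ 2 - y ^ 2)) =
      2 / π * (|sin θ| / ((1 - y ^ 2) * √(|cos θ| ^ 2 - y ^ 2))) := by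
    intro y; rw [sq_abs]; field_simp
  simp_rw [hdensity]
  rw [integral_const_mul, integral_Ico_div_mul_sqrt_sub_sq (abs_pos.mpr hc) (abs_pos.mpr hs) hab]
  field_simp
end

section
/- Pairing of probabilities for the line walk with delocalized initial state: for θ ≠ 0, π/2, π, 3π/2, all t ≥ 2 and 1 ≤ m ≤ ⌊t/2⌋, P(Y_t^L = t-2m) = P(Y_t^L = t-2m-1) and P(Y_t^L = -(t-2m)-1) = P(Y_t^L = -(t-2m)); moreover P(Y_t^L = -t-1) = P(Y_t^L = -t). -/
noncomputable def walkA (c s : ℝ) : ℕ → (ℤ → ℝ) × (ℤ → ℝ)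
  | 0 =>
      (fun x => if x = 0 then c / Real.sqrt 2 else 0,
       fun x => if x = 0 then s / Real.sqrt 2 else 0)
  | t + 1 =>
      (fun x => c * (walkA c s t).1 (x + 1) + s * (walkA c s t).2 (x + 1),
       fun x => s * (walkA c s t).1 (x - 1) - c * (walkA c s t).2 (x - 1))

lemma walkA_decomp (c s : ℝ) : ∀ t : ℕ, ∀ x : ℤ,
    (lineWalk c s t).1 x = (walkA c s t).1 x + (walkA c s t).1 (x + 1) ∧
    (lineWalk c s t).2 x = (walkA c s t).2 x + (walkA c s t).2 (x + 1) := by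
  intro t
  induction t with
  | zero =>
      intro x
      simp only [lineWalk, walkA]
      by_cases hx : x = 0
      · subst hx; norm_num
      · by_cases hx' : x = -1
        · subst hx'; norm_num
        · rw [if_neg (by tauto), if_neg hx, if_neg (by omega),
            if_neg (by tauto), if_neg hx, if_neg (by omega)]
          norm_num
  | succ t ih =>
      intro x
      simp only [lineWalk, walkA]
      obtain ⟨ha1, ha2⟩ := ih (x + 1)
      obtain ⟨hb1, hb2⟩ := ih (x - 1)
      rw [ha1, ha2, hb1, hb2]
      constructor
      · ring
      · have e1 : x + 1 - 1 = x := by ring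
        rw [e1]
        have e2 : x - 1 + 1 = x := by ring
        rw [e2]
        ring

lemma walkA_parity (c s : ℝ) : ∀ t : ℕ, ∀ x : ℤ, ¬ Even (x + t) →
    (walkA c s t).1 x = 0 ∧ (walkA c s t).2 x = 0 := by
  intro t
  induction t with
  | zero =>
      intro x hx
      have : x ≠ 0 := by
        rintro rfl; exact hx (by simp)
      simp [walkA, this]
  | succ t ih =>
      intro x hx
      have h1 : ¬ Even ((x + 1) + t) := by
        intro ⟨k, hk⟩
        exact hx ⟨k, by push_cast at hk ⊢; omega⟩
      have h2 : ¬ Even ((x - 1) + t) := by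
        intro ⟨k, hk⟩
        exact hx ⟨k + 1, by push_cast at hk ⊢; omega⟩
      obtain ⟨e1, e2⟩ := ih (x + 1) h1
      obtain ⟨f1, f2⟩ := ih (x - 1) h2
      simp [walkA, e1, e2, f1, f2]

lemma pairing (c s : ℝ) (t : ℕ) (x : ℤ) (hx : ¬ Even (x + t)) :
    (lineWalk c s t).1 x ^ 2 + (lineWalk c s t).2 x ^ 2
      = (lineWalk c s t).1 (x + 1) ^ 2 + (lineWalk c s t).2 (x + 1) ^ 2 := by
  obtain ⟨d1, d2⟩ := walkA_decomp c s t x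
  obtain ⟨d1', d2'⟩ := walkA_decomp c s t (x + 1)
  obtain ⟨z1, z2⟩ := walkA_parity c s t x hx
  have hx2 : ¬ Even ((x + 2) + t) := by
    intro ⟨k, hk⟩
    exact hx ⟨k - 1, by omega⟩
  obtain ⟨w1, w2⟩ := walkA_parity c s t (x + 2) hx2
  have e : x + 1 + 1 = x + 2 := by ring
  rw [d1, d2, d1', d2', e, z1, z2, w1, w2]
  ring

theorem line_walk_probability_pairing (θ : ℝ) (hθ : θ ∈ Set.Ico 0 (2 * Real.pi))
    (h0 : θ ≠ 0) (h1 : θ ≠ Real.pi / 2) (h2 : θ ≠ Real.pi) (h3 : θ ≠ 3 * Real.pi / 2) :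
    (∀ t : ℕ, 2 ≤ t → ∀ m : ℕ, 1 ≤ m → m ≤ t / 2 →
        ((lineWalk (Real.cos θ) (Real.sin θ) t).1 ((t : ℤ) - 2 * m) ^ 2
            + (lineWalk (Real.cos θ) (Real.sin θ) t).2 ((t : ℤ) - 2 * m) ^ 2
          = (lineWalk (Real.cos θ) (Real.sin θ) t).1 ((t : ℤ) - 2 * m - 1) ^ 2
            + (lineWalk (Real.cos θ) (Real.sin θ) t).2 ((t : ℤ) - 2 * m - 1) ^ 2) ∧
        ((lineWalk (Real.cos θ) (Real.sin θ) t).1 (-((t : ℤ) - 2 * m) - 1) ^ 2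
            + (lineWalk (Real.cos θ) (Real.sin θ) t).2 (-((t : ℤ) - 2 * m) - 1) ^ 2
          = (lineWalk (Real.cos θ) (Real.sin θ) t).1 (-((t : ℤ) - 2 * m)) ^ 2
            + (lineWalk (Real.cos θ) (Real.sin θ) t).2 (-((t : ℤ) - 2 * m)) ^ 2)) ∧
    (∀ t : ℕ, 2 ≤ t →
        (lineWalk (Real.cos θ) (Real.sin θ) t).1 (-(t : ℤ) - 1) ^ 2
            + (lineWalk (Real.cos θ) (Real.sin θ) t).2 (-(t : ℤ) - 1) ^ 2
          = (lineWalk (Real.cos θ) (Real.sin θ) t).1 (-(t : ℤ)) ^ 2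
            + (lineWalk (Real.cos θ) (Real.sin θ) t).2 (-(t : ℤ)) ^ 2) := by
  constructor
  · intro t ht m hm hm2
    constructor
    · have h := pairing (Real.cos θ) (Real.sin θ) t ((t : ℤ) - 2 * m - 1)
        (by intro ⟨k, hk⟩; omega)
      have e : (t : ℤ) - 2 * m - 1 + 1 = (t : ℤ) - 2 * m := by ring
      rw [e] at h
      exact h.symm
    · have h := pairing (Real.cos θ) (Real.sin θ) t (-((t : ℤ) - 2 * m) - 1)
        (by intro ⟨k, hk⟩; omega)
      have e : -((t : ℤ) - 2 * m) - 1 + 1 = -((t : ℤ) - 2 * m) := by ring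
      rw [e] at h
      exact h
  · intro t ht
    have h := pairing (Real.cos θ) (Real.sin θ) t (-(t : ℤ) - 1)
      (by intro ⟨k, hk⟩; omega)
    have e : -(t : ℤ) - 1 + 1 = -(t : ℤ) := by ring
    rw [e] at h
    exact h
end

section
/- For the half-line quantum walk with symmetric Hadamard-type coin (parameter θ, c = cos θ, s = sin θ) and the stated initial state, all amplitudes are of the form (real) · e^{-iθ} rotated appropriately: specifically, writing the line-walk coefficients γ_t(x), δ_t(x) ∈ ℝ as above, the half-line amplitudes satisfy |α_t(x)|² + |β_t(x)|² = (γ_t(x)² + δ_t(x)²) + (γ_t(-x-1)² + δ_t(-x-1)²) for all t ∈ ℕ and x ∈ ℕ, i.e. P(X_t^{HL} = x) = P(Y_t^L = x) + P(Y_t^L = -x-1). -/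
/-!
The half-line walk is the line walk folded at the edge between the sites `-1` and `0`: the
half-line amplitude at `x` is the line amplitude at `x` plus `i` times the swapped, signed line
amplitude at the mirror site `-x-1`, times a unimodular phase depending on the parity of `t + x`.
This folding intertwines the two evolutions; at `x = 0` the mirror term is exactly what the
reflecting boundary of the half-line walk produces. Since the line amplitudes are real, the real
and imaginary parts of a folded amplitude carry the line probabilities at `x` and at `-x-1`.
-/

open Complex

noncomputable def lineStep (c s : ℝ) (u : (ℤ → ℝ) × (ℤ → ℝ)) : (ℤ → ℝ) × (ℤ → ℝ) :=
  (fun x => c * u.1 (x + 1) + s * u.2 (x + 1),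
   fun x => s * u.1 (x - 1) - c * u.2 (x - 1))

noncomputable def halfStep (c s : ℝ) (ψ : (ℕ → ℂ) × (ℕ → ℂ)) : (ℕ → ℂ) × (ℕ → ℂ) :=
  (fun x => c * ψ.1 (x + 1) + s * ψ.2 (x + 1),
   fun x =>
     if x = 0 then c * ψ.1 0 + s * ψ.2 0
     else s * ψ.1 (x - 1) - c * ψ.2 (x - 1))

theorem lineWalk_succ (c s : ℝ) (t : ℕ) :
    lineWalk c s (t + 1) = lineStep c s (lineWalk c s t) := rfl

theorem halfWalk_succ (θ : ℝ) (t : ℕ) :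
    halfWalk θ (t + 1) = halfStep (Real.cos θ) (Real.sin θ) (halfWalk θ t) := rfl

noncomputable def parityPhase (n : ℕ) : ℂ := if Even n then 1 else I

theorem parityPhase_add_two (n : ℕ) : parityPhase (n + 2) = parityPhase n := by
  simp [parityPhase, Nat.even_add]

theorem parityPhase_succ (n : ℕ) : parityPhase (n + 1) = (-1) ^ n * I * parityPhase n := by
  rcases Nat.even_or_odd n with h | h
  · simp [parityPhase, h, h.neg_one_pow, Nat.even_add_one]
  · simp [parityPhase, h.neg_one_pow, Nat.even_add_one,
      Nat.not_even_iff_odd.mpr h]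

theorem norm_parityPhase (n : ℕ) : ‖parityPhase n‖ = 1 := by
  unfold parityPhase; split <;> simp

noncomputable def foldLine (t : ℕ) (u : (ℤ → ℝ) × (ℤ → ℝ)) : (ℕ → ℂ) × (ℕ → ℂ) :=
  (fun x => parityPhase (t + x) * (u.1 x + ((-1) ^ (t + 1) * u.2 (-x - 1) : ℝ) * I),
   fun x => parityPhase (t + x) * (u.2 x + ((-1) ^ t * u.1 (-x - 1) : ℝ) * I))

theorem halfStep_foldLine (c s : ℝ) (t : ℕ) (u : (ℤ → ℝ) × (ℤ → ℝ)) :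
    halfStep c s (foldLine t u) = foldLine (t + 1) (lineStep c s u) := by
  refine Prod.ext (funext fun x => ?_) (funext fun x => ?_)
  · simp only [halfStep, foldLine, lineStep]
    rw [show t + (x + 1) = t + 1 + x by ring,
      show -((x + 1 : ℕ) : ℤ) - 1 = -x - 1 - 1 by push_cast; ring]
    push_cast
    ring
  · rcases x with _ | n
    · -- the phase ratio `(-1) ^ t * I` at the boundary turns the mirror term into the real part
      simp only [halfStep, foldLine, lineStep, ↓reduceIte, parityPhase_succ]
      have hsign : (-1 : ℂ) ^ (t * 2) = 1 := by rw [mul_comm, pow_mul, neg_one_sq, one_pow]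
      push_cast
      linear_combination
        parityPhase t * (c * u.1 0 + s * u.2 0) * ((-1 : ℂ) ^ (t * 2) * I_mul_I - hsign)
    · simp only [halfStep, foldLine, lineStep, if_neg (Nat.succ_ne_zero n), Nat.add_sub_cancel]
      rw [show t + 1 + (n + 1) = t + n + 2 by ring, parityPhase_add_two,
        show ((n + 1 : ℕ) : ℤ) - 1 = n by push_cast; ring,
        show -((n + 1 : ℕ) : ℤ) - 1 + 1 = -n - 1 by push_cast; ring]
      push_cast
      ring

theorem halfWalk_zero_eq_foldLine (θ : ℝ) :
    halfWalk θ 0 = foldLine 0 (lineWalk (Real.cos θ) (Real.sin θ) 0) := by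
  have hexp : exp (-(θ * I)) = cos θ - sin θ * I := by
    rw [← neg_mul, exp_mul_I, cos_neg, sin_neg]; ring
  have hfar (n : ℕ) : ¬(-1 + -(n : ℤ) - 1 = 0) := by omega
  refine Prod.ext (funext fun x => ?_) (funext fun x => ?_) <;> rcases x with _ | n <;>
    simp [halfWalk, foldLine, lineWalk, parityPhase, hexp, hfar]
  · ring
  · linear_combination -(sin θ / √2 : ℂ) * I_mul_I

theorem halfWalk_eq_foldLine (θ : ℝ) (t : ℕ) :
    halfWalk θ t = foldLine t (lineWalk (Real.cos θ) (Real.sin θ) t) := by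
  induction t with
  | zero => exact halfWalk_zero_eq_foldLine θ
  | succ t ih => rw [halfWalk_succ, lineWalk_succ, ih, halfStep_foldLine]

theorem sq_norm_parityPhase_mul (n k : ℕ) (a b : ℝ) :
    ‖parityPhase n * (a + ((-1) ^ k * b : ℝ) * I)‖ ^ 2 = a ^ 2 + b ^ 2 := by
  rw [norm_mul, norm_parityPhase, one_mul, Complex.sq_norm, normSq_add_mul_I, mul_pow,
    ← pow_mul, mul_comm k, pow_mul]
  norm_num

theorem half_line_total_probability_copy_general (θ : ℝ) :
    ∀ (t x : ℕ),
      ‖(halfWalk θ t).1 x‖ ^ 2 + ‖(halfWalk θ t).2 x‖ ^ 2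
        = ((lineWalk (Real.cos θ) (Real.sin θ) t).1 (x : ℤ) ^ 2
            + (lineWalk (Real.cos θ) (Real.sin θ) t).2 (x : ℤ) ^ 2)
          + ((lineWalk (Real.cos θ) (Real.sin θ) t).1 (-(x : ℤ) - 1) ^ 2
            + (lineWalk (Real.cos θ) (Real.sin θ) t).2 (-(x : ℤ) - 1) ^ 2) := by
  intro t x
  rw [halfWalk_eq_foldLine]
  simp only [foldLine, sq_norm_parityPhase_mul]
  ring

theorem half_line_total_probability_copy (θ : ℝ) (h0 : θ ≠ 0) (hπ : θ ≠ Real.pi) :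
    ∀ (t x : ℕ),
      ‖(halfWalk θ t).1 x‖ ^ 2 + ‖(halfWalk θ t).2 x‖ ^ 2
        = ((lineWalk (Real.cos θ) (Real.sin θ) t).1 (x : ℤ) ^ 2
            + (lineWalk (Real.cos θ) (Real.sin θ) t).2 (x : ℤ) ^ 2)
          + ((lineWalk (Real.cos θ) (Real.sin θ) t).1 (-(x : ℤ) - 1) ^ 2
            + (lineWalk (Real.cos θ) (Real.sin θ) t).2 (-(x : ℤ) - 1) ^ 2) :=
  half_line_total_probability_copy_general θ
end

section
/- The cumulative distribution function F(x) = ∫_{-∞}^x 2|s|/(π(1-y²)√(c²-y²))·1_{[0,|c|)}(y) dy satisfies F(x) = 0 for x ≤ 0, F(x) = 1 for x ≥ |c|, and F is continuous and monotone nondecreasing on ℝ, where c = cos θ ≠ 0 and s = sin θ ≠ 0. -/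
/-!
On `[0, |cos θ|)` the density `2|sin θ| / (π (1 - y²) √(cos² θ - y²))` is the derivative of
`(2/π) arcsin (|sin θ| y / (|cos θ| √(1 - y²)))`, which increases from `0` at `y = 0` to `1` at
`y = |cos θ|`, because `sin² θ + cos² θ = 1`. So the density is nonnegative with total mass `1`,
and `F` is the distribution function of an integrable nonnegative function supported in
`[0, |cos θ|)`.
-/

open MeasureTheory Set Real intervalIntegral

section IntegralOverIic

variable {E : Type*} [NormedAddCommGroup E] [NormedSpace ℝ E]

theorem MeasureTheory.Integrable.continuous_setIntegral_Iic {f : ℝ → E} (hf : Integrable f) :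
    Continuous fun x => ∫ y in Iic x, f y := by
  have hsplit : (fun x => ∫ y in Iic x, f y) =
      fun x => (∫ y in Iic 0, f y) + ∫ y in (0 : ℝ)..x, f y := by
    funext x
    rw [← integral_Iic_sub_Iic hf.integrableOn hf.integrableOn, add_sub_cancel]
  rw [hsplit]
  exact continuous_const.add (hf.continuous_primitive 0)

theorem setIntegral_Iic_indicator_Ico_of_le_left {g : ℝ → E} {a b x : ℝ} (hx : x ≤ a) :
    ∫ y in Iic x, (Ico a b).indicator g y = 0 := by
  rw [setIntegral_indicator measurableSet_Ico]
  refine setIntegral_measure_zero _ (measure_mono_null ?_ (measure_singleton a))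
  rintro y ⟨hyx, hay, -⟩
  exact le_antisymm ((mem_Iic.1 hyx).trans hx) hay

theorem setIntegral_Iic_indicator_Ico_of_le_right {g : ℝ → E} {a b x : ℝ} (hab : a ≤ b)
    (hx : b ≤ x) : ∫ y in Iic x, (Ico a b).indicator g y = ∫ y in a..b, g y := by
  rw [setIntegral_indicator measurableSet_Ico,
    inter_eq_self_of_subset_right fun _ hy => mem_Iic.2 (hy.2.le.trans hx),
    integral_Ico_eq_integral_Ioo, ← integral_Ioc_eq_integral_Ioo, integral_of_le hab]

end IntegralOverIic

theorem monotone_setIntegral_Iic_of_nonneg {f : ℝ → ℝ} (hf : Integrable f) (hf0 : 0 ≤ f) :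
    Monotone fun x => ∫ y in Iic x, f y := fun _ _ hxy =>
  setIntegral_mono_set hf.integrableOn (.of_forall hf0) (Iic_subset_Iic.2 hxy).eventuallyLE

noncomputable def halfLineDensity (a b y : ℝ) : ℝ :=
  2 * b / (π * (1 - y ^ 2) * √(a ^ 2 - y ^ 2))

noncomputable def halfLinePrimitive (a b x : ℝ) : ℝ :=
  2 / π * arcsin (b * x / (a * √(1 - x ^ 2)))

section HalfLineDensity

variable {a b : ℝ}

theorem halfLineDensity_nonneg (hb : 0 ≤ b) {y : ℝ} (hy : y ^ 2 < 1) :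
    0 ≤ halfLineDensity a b y := by
  have : 0 < 1 - y ^ 2 := by linarith
  unfold halfLineDensity
  positivity

theorem hasDerivAt_halfLinePrimitive (hb : 0 ≤ b) (hab : a ^ 2 + b ^ 2 = 1) {x : ℝ}
    (hx : x ∈ Ioo 0 a) : HasDerivAt (halfLinePrimitive a b) (halfLineDensity a b x) x := by
  obtain ⟨hx0, hxa⟩ := hx
  have h1x : 0 < 1 - x ^ 2 := by nlinarith
  have hax : 0 < a ^ 2 - x ^ 2 := by nlinarith
  set r := √(1 - x ^ 2)
  set q := √(a ^ 2 - x ^ 2)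
  have hr : 0 < r := sqrt_pos.2 h1x
  have hq : 0 < q := sqrt_pos.2 hax
  have hr2 : r ^ 2 = 1 - x ^ 2 := sq_sqrt h1x.le
  have hq2 : q ^ 2 = a ^ 2 - x ^ 2 := sq_sqrt hax.le
  have ha : 0 < a := hx0.trans hxa
  have hquot : HasDerivAt (fun y => b * y / (a * √(1 - y ^ 2)))
      ((b * (a * r) - b * x * (a * (1 / (2 * r) * -(2 * x)))) / (a * r) ^ 2) x := by
    have hnum : HasDerivAt (fun y => b * y) b x := by simpa using (hasDerivAt_id x).const_mul b
    have hden : HasDerivAt (fun y => 1 - y ^ 2) (-(2 * x)) x := by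
      simpa using (hasDerivAt_pow 2 x).const_sub 1
    exact hnum.div (((hasDerivAt_sqrt h1x.ne').comp x hden).const_mul a) (by positivity)
  have hsqrt : √(1 - (b * x / (a * r)) ^ 2) = q / (a * r) := by
    rw [← sqrt_sq (by positivity : 0 ≤ q / (a * r))]
    congr 1
    field_simp
    nlinarith [hr2, hq2]
  have hφ1 : b * x / (a * r) < 1 := by
    rw [div_lt_one (by positivity)]
    exact lt_of_pow_lt_pow_left₀ 2 (by positivity) (by nlinarith)
  have harcsin := hasDerivAt_arcsin (by linarith [show 0 ≤ b * x / (a * r) by positivity]) hφ1.ne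
  refine ((harcsin.comp x hquot).const_mul (2 / π)).congr_deriv ?_
  rw [hsqrt]
  change _ = 2 * b / (π * (1 - x ^ 2) * q)
  field_simp
  linear_combination (-(b * x ^ 2)) * hr2

theorem continuousOn_halfLinePrimitive (ha0 : 0 < a) (ha1 : a < 1) :
    ContinuousOn (halfLinePrimitive a b) (Icc 0 a) := by
  refine continuousOn_const.mul (continuous_arcsin.comp_continuousOn
    (continuousOn_const.mul continuousOn_id |>.div (by fun_prop) fun x hx => ?_))
  have : 0 < √(1 - x ^ 2) := sqrt_pos.2 (by nlinarith [hx.1, hx.2])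
  positivity

theorem integrableOn_halfLineDensity (ha0 : 0 < a) (hb0 : 0 < b) (hab : a ^ 2 + b ^ 2 = 1) :
    IntegrableOn (halfLineDensity a b) (Ioc 0 a) :=
  integrableOn_deriv_of_nonneg (continuousOn_halfLinePrimitive ha0 (by nlinarith))
    (fun _ hx => hasDerivAt_halfLinePrimitive hb0.le hab hx)
    (fun _ hx => halfLineDensity_nonneg hb0.le (by nlinarith [hx.1, hx.2]))

theorem integral_halfLineDensity (ha0 : 0 < a) (hb0 : 0 < b) (hab : a ^ 2 + b ^ 2 = 1) :
    ∫ y in (0 : ℝ)..a, halfLineDensity a b y = 1 := by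
  rw [integral_eq_sub_of_hasDeriv_right_of_le ha0.le
    (continuousOn_halfLinePrimitive ha0 (by nlinarith))
    (fun _ hx => (hasDerivAt_halfLinePrimitive hb0.le hab hx).hasDerivWithinAt)
    ((intervalIntegrable_iff_integrableOn_Ioc_of_le ha0.le).2
      (integrableOn_halfLineDensity ha0 hb0 hab))]
  have hb : √(1 - a ^ 2) = b := by rw [← sqrt_sq hb0.le]; congr 1; linarith
  have hone : b * a / (a * b) = 1 := by field_simp
  simp [halfLinePrimitive, hb, hone]

end HalfLineDensity

theorem half_line_limit_cdf_properties (θ : ℝ) (hc : Real.cos θ ≠ 0) (hs : Real.sin θ ≠ 0) :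
    let F : ℝ → ℝ := fun x => ∫ y in Set.Iic x,
      Set.indicator (Set.Ico 0 |Real.cos θ|)
        (fun y => 2 * |Real.sin θ| /
          (Real.pi * (1 - y ^ 2) * Real.sqrt (Real.cos θ ^ 2 - y ^ 2))) y
    (∀ x : ℝ, x ≤ 0 → F x = 0) ∧
    (∀ x : ℝ, |Real.cos θ| ≤ x → F x = 1) ∧
    Continuous F ∧ Monotone F := by
  intro F
  set a := |cos θ|
  set b := |sin θ|
  have ha0 : 0 < a := abs_pos.2 hc
  have hb0 : 0 < b := abs_pos.2 hs
  have hab : a ^ 2 + b ^ 2 = 1 := by simp only [a, b, sq_abs, cos_sq_add_sin_sq]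
  have hdens : (fun y => 2 * b / (π * (1 - y ^ 2) * √(cos θ ^ 2 - y ^ 2))) =
      halfLineDensity a b := by
    funext y
    simp only [halfLineDensity, a, sq_abs]
  have hF : F = fun x => ∫ y in Iic x, (Ico 0 a).indicator (halfLineDensity a b) y := by
    rw [← hdens]
  have hint : Integrable ((Ico 0 a).indicator (halfLineDensity a b)) :=
    (integrable_indicator_iff measurableSet_Ico).2
      ((integrableOn_halfLineDensity ha0 hb0 hab).congr_set_ae Ico_ae_eq_Ioc)
  have hnonneg : 0 ≤ (Ico 0 a).indicator (halfLineDensity a b) :=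
    indicator_nonneg fun y hy => halfLineDensity_nonneg hb0.le (by nlinarith [hy.1, hy.2])
  rw [hF]
  exact ⟨fun x hx => setIntegral_Iic_indicator_Ico_of_le_left hx,
    fun x hx => (setIntegral_Iic_indicator_Ico_of_le_right ha0.le hx).trans
      (integral_halfLineDensity ha0 hb0 hab),
    hint.continuous_setIntegral_Iic, monotone_setIntegral_Iic_of_nonneg hint hnonneg⟩
end
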